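/- arXiv:1702.00681 — 2 statements merged into one kernel-verified Lean document; each statement's English description precedes it below -/
import Mathlib

section
/- The Kontsevich weight of the wedge graph equals 1/2: that is, (1/(2π)²) · ∫_{0}^{∞} ∫_{-∞}^{∞} 4y / (((x-1)² + y²)(x² + y²)) dx dy = 1/2. -/
open Real MeasureTheory
open Filter Set Topology

lemma my_integral_Iic_aux {g g' : ℝ → ℝ} {a l : ℝ}
    (hcont : ContinuousWithinAt g (Set.Iic a) a)
    (hderiv : ∀ x ∈ Set.Iio a, HasDerivAt g (g' x) x)
    (g'pos : ∀ x ∈ Set.Iio a, 0 ≤ g' x)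
    (hg : Tendsto g atBot (𝓝 l)) :
    (∫ x in Set.Iic a, g' x) = g a - l ∧ IntegrableOn g' (Set.Iic a) := by
  set G : ℝ → ℝ := fun x => -g (-x) with hGdef
  set G' : ℝ → ℝ := fun x => g' (-x) with hG'def
  have hmaps : Set.MapsTo (fun x : ℝ => -x) (Set.Ici (-a)) (Set.Iic a) := by
    intro x hx
    simp only [Set.mem_Iic]
    simp only [Set.mem_Ici] at hx
    linarith
  have hcontG : ContinuousWithinAt G (Set.Ici (-a)) (-a) := by
    have hcont' : ContinuousWithinAt g (Set.Iic a) (-(-a)) := by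
      rw [neg_neg]; exact hcont
    have h1 : ContinuousWithinAt (fun x : ℝ => g (-x)) (Set.Ici (-a)) (-a) :=
      hcont'.comp (continuous_neg.continuousWithinAt) hmaps
    exact h1.neg
  have hderivG : ∀ x ∈ Set.Ioi (-a), HasDerivAt G (G' x) x := by
    intro x hx
    have hx' : -x ∈ Set.Iio a := by
      simp only [Set.mem_Ioi] at hx; simp only [Set.mem_Iio]; linarith
    have h := (hderiv (-x) hx').comp x (hasDerivAt_neg x)
    have := h.neg
    simpa [G, G', Function.comp_def, Pi.neg_def] using this
  have hG'pos : ∀ x ∈ Set.Ioi (-a), 0 ≤ G' x := by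
    intro x hx
    apply g'pos
    simp only [Set.mem_Ioi] at hx; simp only [Set.mem_Iio]; linarith
  have hGtop : Tendsto G atTop (𝓝 (-l)) :=
    (hg.comp tendsto_neg_atTop_atBot).neg
  have key := integral_Ioi_of_hasDerivAt_of_nonneg hcontG hderivG hG'pos hGtop
  have intG : IntegrableOn G' (Set.Ioi (-a)) :=
    integrableOn_Ioi_deriv_of_nonneg hcontG hderivG hG'pos hGtop
  constructor
  · have h2 : (∫ x in Set.Ioi (-a), g' (-x)) = ∫ x in Set.Iic a, g' x := by
      rw [integral_comp_neg_Ioi]; simp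
    rw [← h2, key]
    simp [G]
    ring
  · have hmap : Measure.map (Homeomorph.neg ℝ).toMeasurableEquiv (volume : Measure ℝ) = volume := by
      simpa using Measure.map_neg_eq_self (volume : Measure ℝ)
    rw [IntegrableOn, ← hmap, ← IntegrableOn, integrableOn_map_equiv]
    have hpre : ((Homeomorph.neg ℝ).toMeasurableEquiv) ⁻¹' (Set.Iic a) = Set.Ici (-a) := by
      ext x; simp [neg_le]
    rw [hpre]
    exact Iff.mpr integrableOn_Ici_iff_integrableOn_Ioi intG



lemma wedge_inner (y : ℝ) (hy : 0 < y) :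
    (∫ x : ℝ, 4 * y / (((x - 1) ^ 2 + y ^ 2) * (x ^ 2 + y ^ 2))) = 8 * π / (1 + 4 * y ^ 2) := by
  have hc : (0:ℝ) < 1 + 4 * y ^ 2 := by positivity
  set f : ℝ → ℝ := fun x => 4 * y / (((x - 1) ^ 2 + y ^ 2) * (x ^ 2 + y ^ 2)) with hf
  set F : ℝ → ℝ := fun x => (4 / (1 + 4 * y ^ 2)) * (arctan ((x - 1) / y) + arctan (x / y))
      + (4 * y / (1 + 4 * y ^ 2)) * (Real.log (x ^ 2 + y ^ 2) - Real.log ((x - 1) ^ 2 + y ^ 2))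
      with hF
  have hderiv : ∀ x : ℝ, HasDerivAt F (f x) x := by
    intro x
    have hu : (0:ℝ) < (x - 1) ^ 2 + y ^ 2 := by positivity
    have hv : (0:ℝ) < x ^ 2 + y ^ 2 := by positivity
    have h1 : HasDerivAt (fun x : ℝ => arctan ((x - 1) / y))
        ((1 / (1 + ((x - 1) / y) ^ 2)) * (1 / y)) x := by
      have hin : HasDerivAt (fun x : ℝ => (x - 1) / y) (1 / y) x := by
        simpa using ((hasDerivAt_id x).sub_const 1).div_const y
      simpa [Function.comp_def] using (Real.hasDerivAt_arctan ((x - 1) / y)).comp x hin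
    have h2 : HasDerivAt (fun x : ℝ => arctan (x / y))
        ((1 / (1 + (x / y) ^ 2)) * (1 / y)) x := by
      have hin : HasDerivAt (fun x : ℝ => x / y) (1 / y) x := by
        simpa using (hasDerivAt_id x).div_const y
      simpa [Function.comp_def] using (Real.hasDerivAt_arctan (x / y)).comp x hin
    have h3 : HasDerivAt (fun x : ℝ => Real.log (x ^ 2 + y ^ 2))
        ((2 * x) / (x ^ 2 + y ^ 2)) x := by
      have hin : HasDerivAt (fun x : ℝ => x ^ 2 + y ^ 2) (2 * x) x := by
        simpa using ((hasDerivAt_id x).pow 2).add_const (y ^ 2)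
      exact hin.log hv.ne'
    have h4 : HasDerivAt (fun x : ℝ => Real.log ((x - 1) ^ 2 + y ^ 2))
        ((2 * (x - 1)) / ((x - 1) ^ 2 + y ^ 2)) x := by
      have hin : HasDerivAt (fun x : ℝ => (x - 1) ^ 2 + y ^ 2) (2 * (x - 1)) x := by
        simpa using (((hasDerivAt_id x).sub_const 1).pow 2).add_const (y ^ 2)
      exact hin.log hu.ne'
    have hy' : y ≠ 0 := hy.ne'
    have e1 : 1 / (1 + ((x - 1) / y) ^ 2) * (1 / y) = y / ((x - 1) ^ 2 + y ^ 2) := by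
      have h : (1 + ((x - 1) / y) ^ 2) ≠ 0 := by positivity
      field_simp
      ring
    have e2 : 1 / (1 + (x / y) ^ 2) * (1 / y) = y / (x ^ 2 + y ^ 2) := by
      have h : (1 + (x / y) ^ 2) ≠ 0 := by positivity
      field_simp
      ring
    rw [e1] at h1
    rw [e2] at h2
    have hFd := ((h1.add h2).const_mul (4 / (1 + 4 * y ^ 2))).add
      ((h3.sub h4).const_mul (4 * y / (1 + 4 * y ^ 2)))
    refine HasDerivAt.congr_deriv (f := F) hFd ?_
    rw [hf]
    field_simp
    ring
  have hnonneg : ∀ x : ℝ, 0 ≤ f x := by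
    intro x
    apply div_nonneg (by positivity)
    positivity
  -- limits of arctan pieces
  have harg_top : Tendsto (fun x : ℝ => (x - 1) / y) atTop atTop := by
    apply Tendsto.atTop_div_const hy
    exact tendsto_atTop_add_const_right _ (-1) tendsto_id |>.congr (by intro x; simp [sub_eq_add_neg])
  have harg_top' : Tendsto (fun x : ℝ => x / y) atTop atTop :=
    tendsto_id.atTop_div_const hy
  have harg_bot : Tendsto (fun x : ℝ => (x - 1) / y) atBot atBot := by
    apply Tendsto.atBot_div_const hy
    exact tendsto_atBot_add_const_right _ (-1) tendsto_id |>.congr (by intro x; simp [sub_eq_add_neg])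
  have harg_bot' : Tendsto (fun x : ℝ => x / y) atBot atBot :=
    tendsto_id.atBot_div_const hy
  have hat1 : Tendsto (fun x : ℝ => arctan ((x - 1) / y)) atTop (𝓝 (π / 2)) :=
    (tendsto_arctan_atTop.mono_right nhdsWithin_le_nhds).comp harg_top
  have hat2 : Tendsto (fun x : ℝ => arctan (x / y)) atTop (𝓝 (π / 2)) :=
    (tendsto_arctan_atTop.mono_right nhdsWithin_le_nhds).comp harg_top'
  have hab1 : Tendsto (fun x : ℝ => arctan ((x - 1) / y)) atBot (𝓝 (-(π / 2))) :=
    (tendsto_arctan_atBot.mono_right nhdsWithin_le_nhds).comp harg_bot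
  have hab2 : Tendsto (fun x : ℝ => arctan (x / y)) atBot (𝓝 (-(π / 2))) :=
    (tendsto_arctan_atBot.mono_right nhdsWithin_le_nhds).comp harg_bot'
  -- limit of log piece : ratio tends to 1
  have hratio_top : Tendsto
      (fun x : ℝ => (1 + y ^ 2 * (x⁻¹) ^ 2) / ((1 - x⁻¹) ^ 2 + y ^ 2 * (x⁻¹) ^ 2))
      atTop (𝓝 1) := by
    have h0 : Tendsto (fun x : ℝ => x⁻¹) atTop (𝓝 0) := tendsto_inv_atTop_zero
    have hnum : Tendsto (fun x : ℝ => 1 + y ^ 2 * (x⁻¹) ^ 2) atTop (𝓝 1) := by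
      have := tendsto_const_nhds (x := (1:ℝ)) (f := atTop) |>.add
        (((h0.pow 2)).const_mul (y ^ 2))
      simpa using this
    have hden : Tendsto (fun x : ℝ => (1 - x⁻¹) ^ 2 + y ^ 2 * (x⁻¹) ^ 2) atTop (𝓝 1) := by
      have := ((tendsto_const_nhds (x := (1:ℝ)) (f := atTop)).sub h0).pow 2 |>.add
        (((h0.pow 2)).const_mul (y ^ 2))
      simpa using this
    simpa [Pi.div_def] using hnum.div hden one_ne_zero
  have hratio_bot : Tendsto
      (fun x : ℝ => (1 + y ^ 2 * (x⁻¹) ^ 2) / ((1 - x⁻¹) ^ 2 + y ^ 2 * (x⁻¹) ^ 2))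
      atBot (𝓝 1) := by
    have h0 : Tendsto (fun x : ℝ => x⁻¹) atBot (𝓝 0) := by
      have hneg : Tendsto (fun x : ℝ => -x) atBot atTop := tendsto_neg_atBot_atTop
      have h1 : Tendsto (fun x : ℝ => (-x)⁻¹) atBot (𝓝 0) := tendsto_inv_atTop_zero.comp hneg
      have h2 := h1.neg
      simp only [inv_neg, neg_neg, neg_zero] at h2
      exact h2
    have hnum : Tendsto (fun x : ℝ => 1 + y ^ 2 * (x⁻¹) ^ 2) atBot (𝓝 1) := by
      have := tendsto_const_nhds (x := (1:ℝ)) (f := atBot) |>.add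
        (((h0.pow 2)).const_mul (y ^ 2))
      simpa using this
    have hden : Tendsto (fun x : ℝ => (1 - x⁻¹) ^ 2 + y ^ 2 * (x⁻¹) ^ 2) atBot (𝓝 1) := by
      have := ((tendsto_const_nhds (x := (1:ℝ)) (f := atBot)).sub h0).pow 2 |>.add
        (((h0.pow 2)).const_mul (y ^ 2))
      simpa using this
    simpa [Pi.div_def] using hnum.div hden one_ne_zero
  have hlogeq : ∀ x : ℝ, x ≠ 0 →
      Real.log ((1 + y ^ 2 * (x⁻¹) ^ 2) / ((1 - x⁻¹) ^ 2 + y ^ 2 * (x⁻¹) ^ 2))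
        = Real.log (x ^ 2 + y ^ 2) - Real.log ((x - 1) ^ 2 + y ^ 2) := by
    intro x hx
    have hu : (0:ℝ) < (x - 1) ^ 2 + y ^ 2 := by positivity
    have hv : (0:ℝ) < x ^ 2 + y ^ 2 := by positivity
    rw [← Real.log_div hv.ne' hu.ne']
    congr 1
    field_simp
  have hlog_top : Tendsto
      (fun x : ℝ => Real.log (x ^ 2 + y ^ 2) - Real.log ((x - 1) ^ 2 + y ^ 2))
      atTop (𝓝 0) := by
    have hl := (Real.continuousAt_log one_ne_zero).tendsto.comp hratio_top
    rw [Real.log_one] at hl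
    apply hl.congr'
    filter_upwards [eventually_gt_atTop (0:ℝ)] with x hx
    exact hlogeq x hx.ne'
  have hlog_bot : Tendsto
      (fun x : ℝ => Real.log (x ^ 2 + y ^ 2) - Real.log ((x - 1) ^ 2 + y ^ 2))
      atBot (𝓝 0) := by
    have hl := (Real.continuousAt_log one_ne_zero).tendsto.comp hratio_bot
    rw [Real.log_one] at hl
    apply hl.congr'
    filter_upwards [eventually_lt_atBot (0:ℝ)] with x hx
    exact hlogeq x hx.ne
  have hFtop : Tendsto F atTop (𝓝 (4 * π / (1 + 4 * y ^ 2))) := by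
    have := ((hat1.add hat2).const_mul (4 / (1 + 4 * y ^ 2))).add
      (hlog_top.const_mul (4 * y / (1 + 4 * y ^ 2)))
    convert this using 2
    ring
  have hFbot : Tendsto F atBot (𝓝 (-(4 * π / (1 + 4 * y ^ 2)))) := by
    have := ((hab1.add hab2).const_mul (4 / (1 + 4 * y ^ 2))).add
      (hlog_bot.const_mul (4 * y / (1 + 4 * y ^ 2)))
    convert this using 2
    ring
  have hcont0 : ContinuousWithinAt F (Set.Ici (0:ℝ)) 0 :=
    (hderiv 0).continuousAt.continuousWithinAt
  have hcont0' : ContinuousWithinAt F (Set.Iic (0:ℝ)) 0 :=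
    (hderiv 0).continuousAt.continuousWithinAt
  have hIoi : (∫ x in Set.Ioi (0:ℝ), f x) = 4 * π / (1 + 4 * y ^ 2) - F 0 :=
    integral_Ioi_of_hasDerivAt_of_nonneg hcont0 (fun x _ => hderiv x)
      (fun x _ => hnonneg x) hFtop
  have hIic := my_integral_Iic_aux hcont0' (fun x _ => hderiv x)
      (fun x _ => hnonneg x) hFbot
  have hintIoi : IntegrableOn f (Set.Ioi (0:ℝ)) :=
    integrableOn_Ioi_deriv_of_nonneg hcont0 (fun x _ => hderiv x)
      (fun x _ => hnonneg x) hFtop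
  have hsplit := intervalIntegral.integral_Iic_add_Ioi (b := (0:ℝ)) (μ := volume) hIic.2 hintIoi
  rw [← hsplit, hIoi, hIic.1]
  ring

/-- The Kontsevich weight of the wedge graph equals `1/2`:
`(1/(2π)²) ∫_0^∞ ∫_{-∞}^{∞} 4y/(((x-1)²+y²)(x²+y²)) dx dy = 1/2`. -/
theorem wedge_graph_weight :
    (1 / (2 * π) ^ 2) *
      (∫ y in Set.Ioi (0 : ℝ), ∫ x : ℝ,
        4 * y / (((x - 1) ^ 2 + y ^ 2) * (x ^ 2 + y ^ 2))) = 1 / 2 := by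
  have hcong : (∫ y in Set.Ioi (0:ℝ), ∫ x : ℝ,
      4 * y / (((x - 1) ^ 2 + y ^ 2) * (x ^ 2 + y ^ 2)))
      = ∫ y in Set.Ioi (0:ℝ), 8 * π / (1 + 4 * y ^ 2) := by
    apply setIntegral_congr_fun measurableSet_Ioi
    intro y hy
    exact wedge_inner y hy
  rw [hcong]
  have hpi : (0:ℝ) < π := Real.pi_pos
  have houter : (∫ y in Set.Ioi (0:ℝ), 8 * π / (1 + 4 * y ^ 2)) = 2 * π ^ 2 := by
    have hderiv : ∀ y : ℝ, HasDerivAt (fun y : ℝ => 4 * π * arctan (2 * y))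
        (8 * π / (1 + 4 * y ^ 2)) y := by
      intro y
      have hin : HasDerivAt (fun y : ℝ => 2 * y) 2 y := by
        simpa using (hasDerivAt_id y).const_mul 2
      have h := ((Real.hasDerivAt_arctan (2 * y)).comp y hin).const_mul (4 * π)
      refine HasDerivAt.congr_deriv (f := fun y : ℝ => 4 * π * arctan (2 * y)) h ?_
      have hpos : (0:ℝ) < 1 + (2 * y) ^ 2 := by positivity
      field_simp
      ring
    have hcont : ContinuousWithinAt (fun y : ℝ => 4 * π * arctan (2 * y)) (Set.Ici (0:ℝ)) 0 :=
      (hderiv 0).continuousAt.continuousWithinAt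
    have hnonneg : ∀ y ∈ Set.Ioi (0:ℝ), 0 ≤ 8 * π / (1 + 4 * y ^ 2) := by
      intro y _
      positivity
    have htop : Tendsto (fun y : ℝ => 4 * π * arctan (2 * y)) atTop (𝓝 (2 * π ^ 2)) := by
      have harg : Tendsto (fun y : ℝ => 2 * y) atTop atTop := by
        apply Tendsto.const_mul_atTop (by norm_num : (0:ℝ) < 2) tendsto_id
      have := ((tendsto_arctan_atTop.mono_right nhdsWithin_le_nhds).comp harg).const_mul (4 * π)
      have heq : 4 * π * (π / 2) = 2 * π ^ 2 := by ring
      rw [heq] at this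
      exact this
    have hint := integral_Ioi_of_hasDerivAt_of_nonneg hcont (fun y _ => hderiv y) hnonneg htop
    rw [hint]
    simp
  rw [houter]
  have hπ : π ≠ 0 := hpi.ne'
  field_simp
end

section
/- Let P : ℝ^d → Matrix (Fin d) (Fin d) ℝ be smooth and skew-symmetric. Define bilinear operations on smooth functions: B₀(f,g) = f·g, B₁(f,g) = Σ P^{ij} ∂_i f ∂_j g, and B₂(f,g) = (1/2) Σ P^{ij} P^{kℓ} ∂_k∂_i f ∂_ℓ∂_j g + (1/3) Σ (∂_ℓ P^{ij}) P^{kℓ} ∂_k∂_i f ∂_j g - (1/3) Σ (∂_ℓ P^{ij}) P^{kℓ} ∂_i f ∂_k∂_j g - (1/6) Σ (∂_ℓ P^{ij})(∂_j P^{kℓ}) ∂_i f ∂_k g. Then the ħ²-coefficient of the associator of ⋆ = B₀ + ħB₁ + ħ²B₂, namely A₂(f,g,h) = B₂(B₀(f,g),h) + B₁(B₁(f,g),h) + B₀(B₂(f,g),h) - B₂(f,B₀(g,h)) - B₁(f,B₁(g,h)) - B₀(f,B₂(g,h)), equals (2/3) · Σ_{i,j,k} [ Σ_ℓ ( P^{ℓk}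 ∂_ℓ P^{ij} + P^{ℓi} ∂_ℓ P^{jk} + P^{ℓj} ∂_ℓ P^{ki} ) ] · ∂_i f · ∂_j g · ∂_k h for all smooth f, g, h. -/
/-- The `i`-th partial derivative of a function on `ℝ^d`. -/
noncomputable def pd {d : ℕ} (i : Fin d) (f : (Fin d → ℝ) → ℝ) : (Fin d → ℝ) → ℝ :=
  fun x => fderiv ℝ f x (Pi.single i 1)

/-- Order-ħ⁰ term of the Kontsevich star-product: the pointwise product. -/
def B0 {d : ℕ} (f g : (Fin d → ℝ) → ℝ) : (Fin d → ℝ) → ℝ := fun x => f x * g x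

/-- Order-ħ¹ term of the Kontsevich star-product: `B₁(f,g) = Σ P^{ij} ∂_i f ∂_j g`. -/
noncomputable def B1 {d : ℕ} (P : (Fin d → ℝ) → Matrix (Fin d) (Fin d) ℝ)
    (f g : (Fin d → ℝ) → ℝ) : (Fin d → ℝ) → ℝ :=
  fun x => ∑ i, ∑ j, P x i j * pd i f x * pd j g x

/-- Order-ħ² term of the Kontsevich star-product, with coefficients
`1/2, 1/3, -1/3, -1/6`. -/
noncomputable def B2 {d : ℕ} (P : (Fin d → ℝ) → Matrix (Fin d) (Fin d) ℝ)
    (f g : (Fin d → ℝ) → ℝ) : (Fin d → ℝ) → ℝ := fun x =>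
  (1 / 2) * (∑ i, ∑ j, ∑ k, ∑ l,
      P x i j * P x k l * pd k (pd i f) x * pd l (pd j g) x)
  + (1 / 3) * (∑ i, ∑ j, ∑ k, ∑ l,
      pd l (fun y => P y i j) x * P x k l * pd k (pd i f) x * pd j g x)
  - (1 / 3) * (∑ i, ∑ j, ∑ k, ∑ l,
      pd l (fun y => P y i j) x * P x k l * pd i f x * pd k (pd j g) x)
  - (1 / 6) * (∑ i, ∑ j, ∑ k, ∑ l,
      pd l (fun y => P y i j) x * pd j (fun y => P y k l) x * pd i f x * pd k g x)

/-!
The ħ²-associator is the sum of `B₁(B₁(f,g),h) - B₁(f,B₁(g,h))` and the part of `B₂` paired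
with the product `B₀`, which is a Hochschild coboundary. Freezing the coefficients of `B₂` at the
point, `B₂` is a combination of bidifferential operators of orders (2,2), (2,1), (1,2), (1,1), whose
coboundaries the Leibniz rule computes: the (1,1) operator is a biderivation and drops out, and no
third derivatives survive. The terms quadratic in `P` then cancel against the second-derivative
part of `B₁ ∘ B₁` as for the Moyal product: each term is killed by its image under the exchange
`(i,j) ↔ (k,l)` of index pairs, using the symmetry of Hessians. The terms linear in `∂P` are
reindexed and, by the skew-symmetry of `P` and of `∂ₗP`, collect into two thirds of the three
cyclic sums `∑ₗ P^{lk} ∂ₗP^{ij}`, `∑ₗ P^{li} ∂ₗP^{jk}`, `∑ₗ P^{lj} ∂ₗP^{ki}`.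
-/

open Finset

section Algebra

variable {ι : Type*} [Fintype ι]

theorem sum_four_swap_pairs {M : Type*} [AddCommMonoid M] (F : ι → ι → ι → ι → M) :
    ∑ i, ∑ j, ∑ k, ∑ l, F i j k l = ∑ i, ∑ j, ∑ k, ∑ l, F k l i j :=
  calc ∑ i, ∑ j, ∑ k, ∑ l, F i j k l = ∑ p : ι × ι, ∑ q : ι × ι, F p.1 p.2 q.1 q.2 := by
        simp only [Fintype.sum_prod_type]
    _ = ∑ q : ι × ι, ∑ p : ι × ι, F p.1 p.2 q.1 q.2 := sum_comm
    _ = _ := by simp only [Fintype.sum_prod_type]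

theorem sum_four_eq_zero_of_swap_pairs {R : Type*} [NonAssocRing R] [NoZeroDivisors R]
    [CharZero R] {F : ι → ι → ι → ι → R} (hF : ∀ i j k l, F i j k l + F k l i j = 0) :
    ∑ i, ∑ j, ∑ k, ∑ l, F i j k l = 0 := by
  refine add_self_eq_zero.mp ?_
  conv_lhs => arg 2; rw [sum_four_swap_pairs]
  simp only [← sum_add_distrib, hF, sum_const_zero]

variable {𝕜 : Type*} [Field 𝕜] [CharZero 𝕜]

theorem moyal_terms_cancel (P : ι → ι → 𝕜) (a b c : ι → 𝕜) {A B C : ι → ι → 𝕜}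
    (hA : ∀ i j, A i j = A j i) (hB : ∀ i j, B i j = B j i) (hC : ∀ i j, C i j = C j i) :
    1 / 2 * ∑ i, ∑ j, ∑ k, ∑ l, P i j * P k l *
        ((a k * b i + a i * b k) * C l j - A k i * (b l * c j + b j * c l))
      + (∑ i, ∑ j, ∑ k, ∑ l, P i j * P k l * (A i k * b l + a k * B i l) * c j
      - ∑ i, ∑ j, ∑ k, ∑ l, P i j * P k l * a i * (B j k * c l + b k * C j l)) = 0 := by
  simp only [mul_sum, ← sum_add_distrib, ← sum_sub_distrib]
  refine sum_four_eq_zero_of_swap_pairs fun i j k l => ?_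
  rw [hA i k, hB i l, hB j k, hC j l]
  ring

theorem dP_terms_eq_jacobiator (P : ι → ι → 𝕜) (Q : ι → ι → ι → 𝕜)
    (hP : ∀ i j, P i j = -P j i) (hQ : ∀ l i j, Q l i j = -Q l j i) (a b c : ι → 𝕜) :
    1 / 3 * (∑ i, ∑ j, ∑ k, ∑ l, Q l i j * P k l * a k * b i * c j
        + ∑ i, ∑ j, ∑ k, ∑ l, Q l i j * P k l * a i * b k * c j)
      + 1 / 3 * (∑ i, ∑ j, ∑ k, ∑ l, Q l i j * P k l * a i * b k * c j
        + ∑ i, ∑ j, ∑ k, ∑ l, Q l i j * P k l * a i * b j * c k)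
      + (∑ i, ∑ j, ∑ k, ∑ l, P i j * Q i k l * a k * b l * c j
        - ∑ i, ∑ j, ∑ k, ∑ l, P i j * Q j k l * a i * b k * c l)
    = 2 / 3 * ∑ i, ∑ j, ∑ k,
      (∑ l, (P l k * Q l i j + P l i * Q l j k + P l j * Q l k i)) * a i * b j * c k := by
  set J₁ := ∑ i, ∑ j, ∑ k, ∑ l, P l k * Q l i j * a i * b j * c k with hJ₁
  set J₂ := ∑ i, ∑ j, ∑ k, ∑ l, P l i * Q l j k * a i * b j * c k with hJ₂
  set J₃ := ∑ i, ∑ j, ∑ k, ∑ l, P l j * Q l k i * a i * b j * c k with hJ₃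
  have hJ : ∑ i, ∑ j, ∑ k, (∑ l, (P l k * Q l i j + P l i * Q l j k + P l j * Q l k i))
      * a i * b j * c k = J₁ + J₂ + J₃ := by
    simp only [hJ₁, hJ₂, hJ₃, sum_mul, add_mul, sum_add_distrib]
  have h₁ : ∑ i, ∑ j, ∑ k, ∑ l, Q l i j * P k l * a k * b i * c j = -J₂ := by
    rw [sum_comm_cycle, hJ₂]
    simp only [← sum_neg_distrib]
    congr! 4 with i _ j _ k _ l _
    rw [hP i l]; ring
  have h₂ : ∑ i, ∑ j, ∑ k, ∑ l, Q l i j * P k l * a i * b k * c j = J₃ := by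
    refine (sum_congr rfl fun i _ => sum_comm).trans ?_
    congr! 4 with i _ j _ k _ l _
    rw [hP j l, hQ l i k]; ring
  have h₃ : ∑ i, ∑ j, ∑ k, ∑ l, Q l i j * P k l * a i * b j * c k = -J₁ := by
    simp only [hJ₁, ← sum_neg_distrib]
    congr! 4 with i _ j _ k _ l _
    rw [hP k l]; ring
  have hL : ∑ i, ∑ j, ∑ k, ∑ l, P i j * Q i k l * a k * b l * c j = J₁ := by
    rw [sum_four_swap_pairs]
    exact sum_congr rfl fun _ _ => sum_congr rfl fun _ _ => sum_comm
  have hR : ∑ i, ∑ j, ∑ k, ∑ l, P i j * Q j k l * a i * b k * c l = -J₂ := by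
    rw [sum_congr rfl fun _ _ => sum_comm_cycle.symm, hJ₂]
    simp only [← sum_neg_distrib]
    congr! 4 with i _ j _ k _ l _
    rw [hP i l]; ring
  rw [hJ, h₁, h₂, h₃, hL, hR]
  ring

end Algebra

section Calculus

variable {d : ℕ} {u v : (Fin d → ℝ) → ℝ} {x : Fin d → ℝ}

theorem pd_add (hu : DifferentiableAt ℝ u x) (hv : DifferentiableAt ℝ v x) (i : Fin d) :
    pd i (fun y => u y + v y) x = pd i u x + pd i v x := by
  simp [pd, fderiv_fun_add hu hv]

theorem pd_mul (hu : DifferentiableAt ℝ u x) (hv : DifferentiableAt ℝ v x) (i : Fin d) :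
    pd i (fun y => u y * v y) x = pd i u x * v x + u x * pd i v x := by
  simp [pd, fderiv_fun_mul hu hv]
  ring

theorem pd_sum {ι : Type*} (s : Finset ι) {w : ι → (Fin d → ℝ) → ℝ}
    (hw : ∀ a ∈ s, DifferentiableAt ℝ (w a) x) (i : Fin d) :
    pd i (fun y => ∑ a ∈ s, w a y) x = ∑ a ∈ s, pd i (w a) x := by
  simp [pd, fderiv_fun_sum hw]

theorem pd_neg (i : Fin d) : pd i (fun y => -u y) x = -pd i u x := by
  simp [pd]

theorem ContDiff.differentiable_pd (hu : ContDiff ℝ 2 u) (i : Fin d) :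
    Differentiable ℝ (pd i u) :=
  ((hu.fderiv_right (m := 1) (by norm_num)).clm_apply contDiff_const).differentiable one_ne_zero

theorem pd_pd_comm (hu : ContDiff ℝ 2 u) (i j : Fin d) (x : Fin d → ℝ) :
    pd i (pd j u) x = pd j (pd i u) x := by
  have hD : Differentiable ℝ (fderiv ℝ u) :=
    (hu.fderiv_right (m := 1) (by norm_num)).differentiable one_ne_zero
  have hpd : ∀ a b, pd a (pd b u) x = fderiv ℝ (fderiv ℝ u) x (Pi.single a 1) (Pi.single b 1) := by
    intro a b
    rw [pd, show pd b u = fun y => fderiv ℝ u y (Pi.single b 1) from rfl,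
      fderiv_clm_apply (hD x) (differentiableAt_const _)]
    simp
  rw [hpd, hpd, (hu.contDiffAt.isSymmSndFDerivAt (by simp)).eq]

theorem B0_apply : B0 u v x = u x * v x := rfl

theorem pd_B0 (hu : DifferentiableAt ℝ u x) (hv : DifferentiableAt ℝ v x) (i : Fin d) :
    pd i (B0 u v) x = pd i u x * v x + u x * pd i v x :=
  pd_mul hu hv i

theorem pd_pd_B0 (hu : ContDiff ℝ 2 u) (hv : ContDiff ℝ 2 v) (k i : Fin d) :
    pd k (pd i (B0 u v)) x = pd k (pd i u) x * v x + pd i u x * pd k v x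
      + (pd k u x * pd i v x + u x * pd k (pd i v) x) := by
  have hu₁ := hu.differentiable two_ne_zero
  have hv₁ := hv.differentiable two_ne_zero
  have hgrad : pd i (B0 u v) = fun y => pd i u y * v y + u y * pd i v y :=
    funext fun y => pd_B0 (hu₁ y) (hv₁ y) i
  rw [hgrad, pd_add ((hu.differentiable_pd i x).fun_mul (hv₁ x))
      ((hu₁ x).fun_mul (hv.differentiable_pd i x)),
    pd_mul (hu.differentiable_pd i x) (hv₁ x), pd_mul (hu₁ x) (hv.differentiable_pd i x)]

theorem B1_apply (P : (Fin d → ℝ) → Matrix (Fin d) (Fin d) ℝ) :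
    B1 P u v x = ∑ i, ∑ j, P x i j * pd i u x * pd j v x := rfl

theorem pd_B1 {P : (Fin d → ℝ) → Matrix (Fin d) (Fin d) ℝ}
    (hP : ∀ i j, DifferentiableAt ℝ (fun y => P y i j) x) (hu : ContDiff ℝ 2 u)
    (hv : ContDiff ℝ 2 v) (a : Fin d) :
    pd a (B1 P u v) x = ∑ i, ∑ j, (pd a (fun y => P y i j) x * pd i u x * pd j v x
      + P x i j * (pd a (pd i u) x * pd j v x + pd i u x * pd a (pd j v) x)) := by
  have hPu : ∀ i j, DifferentiableAt ℝ (fun y => P y i j * pd i u y) x :=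
    fun i j => (hP i j).fun_mul (hu.differentiable_pd i x)
  unfold B1
  rw [pd_sum _ fun i _ => DifferentiableAt.fun_sum fun j _ =>
    (hPu i j).fun_mul (hv.differentiable_pd j x)]
  refine sum_congr rfl fun i _ => ?_
  rw [pd_sum _ fun j _ => (hPu i j).fun_mul (hv.differentiable_pd j x)]
  refine sum_congr rfl fun j _ => ?_
  rw [pd_mul (hPu i j) (hv.differentiable_pd j x), pd_mul (hP i j) (hu.differentiable_pd i x)]
  ring

end Calculus

section Associator

variable {d : ℕ} {f g h : (Fin d → ℝ) → ℝ} {x : Fin d → ℝ}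

-- The contribution of `B` paired with `B0` to an associator: minus the Hochschild coboundary of `B`
-- in the usual sign convention.
def hochschild (B : ((Fin d → ℝ) → ℝ) → ((Fin d → ℝ) → ℝ) → (Fin d → ℝ) → ℝ)
    (f g h : (Fin d → ℝ) → ℝ) : (Fin d → ℝ) → ℝ := fun x =>
  B (B0 f g) h x - B f (B0 g h) x + B0 (B f g) h x - B0 f (B g h) x

theorem associator_order_two_eq
    (B₁ B₂ : ((Fin d → ℝ) → ℝ) → ((Fin d → ℝ) → ℝ) → (Fin d → ℝ) → ℝ) :
    B₂ (B0 f g) h x + B₁ (B₁ f g) h x + B0 (B₂ f g) h x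
      - B₂ f (B0 g h) x - B₁ f (B₁ g h) x - B0 f (B₂ g h) x =
    hochschild B₂ f g h x + (B₁ (B₁ f g) h x - B₁ f (B₁ g h) x) := by
  unfold hochschild
  ring

-- Bidifferential operators with coefficients frozen at the point, indexed as in the terms of `B2`.
noncomputable def gradGrad (C : Fin d → Fin d → Fin d → Fin d → ℝ) (u v : (Fin d → ℝ) → ℝ)
    (x : Fin d → ℝ) : ℝ :=
  ∑ i, ∑ j, ∑ k, ∑ l, C i j k l * pd i u x * pd k v x

noncomputable def hessGrad (C : Fin d → Fin d → Fin d → Fin d → ℝ) (u v : (Fin d → ℝ) → ℝ)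
    (x : Fin d → ℝ) : ℝ :=
  ∑ i, ∑ j, ∑ k, ∑ l, C i j k l * pd k (pd i u) x * pd j v x

noncomputable def gradHess (C : Fin d → Fin d → Fin d → Fin d → ℝ) (u v : (Fin d → ℝ) → ℝ)
    (x : Fin d → ℝ) : ℝ :=
  ∑ i, ∑ j, ∑ k, ∑ l, C i j k l * pd i u x * pd k (pd j v) x

noncomputable def hessHess (C : Fin d → Fin d → Fin d → Fin d → ℝ) (u v : (Fin d → ℝ) → ℝ)
    (x : Fin d → ℝ) : ℝ :=
  ∑ i, ∑ j, ∑ k, ∑ l, C i j k l * pd k (pd i u) x * pd l (pd j v) x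

variable (C : Fin d → Fin d → Fin d → Fin d → ℝ)

theorem hochschild_gradGrad (hf : DifferentiableAt ℝ f x) (hg : DifferentiableAt ℝ g x)
    (hh : DifferentiableAt ℝ h x) : hochschild (gradGrad C) f g h x = 0 := by
  simp only [hochschild, gradGrad, pd_B0 hf hg, pd_B0 hg hh, B0_apply]
  simp only [mul_sum, sum_mul, ← sum_add_distrib, ← sum_sub_distrib]
  refine sum_eq_zero fun i _ => sum_eq_zero fun j _ => sum_eq_zero fun k _ =>
    sum_eq_zero fun l _ => ?_
  ring

theorem hochschild_hessGrad (hf : ContDiff ℝ 2 f) (hg : ContDiff ℝ 2 g)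
    (hh : DifferentiableAt ℝ h x) :
    hochschild (hessGrad C) f g h x =
      ∑ i, ∑ j, ∑ k, ∑ l, C i j k l * pd k f x * pd i g x * pd j h x
        + ∑ i, ∑ j, ∑ k, ∑ l, C i j k l * pd i f x * pd k g x * pd j h x := by
  simp only [hochschild, hessGrad, pd_pd_B0 hf hg,
    pd_B0 (hg.differentiable two_ne_zero x) hh, B0_apply]
  simp only [mul_sum, sum_mul, ← sum_add_distrib, ← sum_sub_distrib]
  congr! 4
  ring

theorem hochschild_gradHess (hf : DifferentiableAt ℝ f x) (hg : ContDiff ℝ 2 g)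
    (hh : ContDiff ℝ 2 h) :
    hochschild (gradHess C) f g h x =
      -(∑ i, ∑ j, ∑ k, ∑ l, C i j k l * pd i f x * pd k g x * pd j h x
        + ∑ i, ∑ j, ∑ k, ∑ l, C i j k l * pd i f x * pd j g x * pd k h x) := by
  simp only [hochschild, gradHess, pd_pd_B0 hg hh,
    pd_B0 hf (hg.differentiable two_ne_zero x), B0_apply]
  simp only [mul_sum, sum_mul, ← sum_add_distrib, ← sum_sub_distrib, ← sum_neg_distrib]
  congr! 4
  ring

theorem hochschild_hessHess (hf : ContDiff ℝ 2 f) (hg : ContDiff ℝ 2 g) (hh : ContDiff ℝ 2 h) :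
    hochschild (hessHess C) f g h x = ∑ i, ∑ j, ∑ k, ∑ l, C i j k l *
      ((pd k f x * pd i g x + pd i f x * pd k g x) * pd l (pd j h) x
        - pd k (pd i f) x * (pd l g x * pd j h x + pd j g x * pd l h x)) := by
  simp only [hochschild, hessHess, pd_pd_B0 hf hg, pd_pd_B0 hg hh, B0_apply]
  simp only [mul_sum, sum_mul, ← sum_add_distrib, ← sum_sub_distrib]
  congr! 4
  ring

variable (P : (Fin d → ℝ) → Matrix (Fin d) (Fin d) ℝ)

theorem hochschild_B2 :
    hochschild (B2 P) f g h x =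
      1 / 2 * hochschild (hessHess fun i j k l => P x i j * P x k l) f g h x
      + 1 / 3 * hochschild (hessGrad fun i j k l => pd l (fun y => P y i j) x * P x k l) f g h x
      - 1 / 3 * hochschild (gradHess fun i j k l => pd l (fun y => P y i j) x * P x k l) f g h x
      - 1 / 6 * hochschild (gradGrad fun i j k l =>
          pd l (fun y => P y i j) x * pd j (fun y => P y k l) x) f g h x := by
  simp only [hochschild, B0_apply]
  unfold B2 hessHess hessGrad gradHess gradGrad
  ring

theorem B1_B1_left (hP : ∀ i j, DifferentiableAt ℝ (fun y => P y i j) x)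
    (hf : ContDiff ℝ 2 f) (hg : ContDiff ℝ 2 g) :
    B1 P (B1 P f g) h x =
      ∑ i, ∑ j, ∑ k, ∑ l, P x i j * pd i (fun y => P y k l) x * pd k f x * pd l g x * pd j h x
      + ∑ i, ∑ j, ∑ k, ∑ l, P x i j * P x k l *
          (pd i (pd k f) x * pd l g x + pd k f x * pd i (pd l g) x) * pd j h x := by
  rw [B1_apply]
  simp only [pd_B1 hP hf hg, mul_sum, sum_mul, ← sum_add_distrib]
  congr! 4
  ring

theorem B1_B1_right (hP : ∀ i j, DifferentiableAt ℝ (fun y => P y i j) x)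
    (hg : ContDiff ℝ 2 g) (hh : ContDiff ℝ 2 h) :
    B1 P f (B1 P g h) x =
      ∑ i, ∑ j, ∑ k, ∑ l, P x i j * pd j (fun y => P y k l) x * pd i f x * pd k g x * pd l h x
      + ∑ i, ∑ j, ∑ k, ∑ l, P x i j * P x k l * pd i f x *
          (pd j (pd k g) x * pd l h x + pd k g x * pd j (pd l h) x) := by
  rw [B1_apply]
  simp only [pd_B1 hP hg hh, mul_sum, ← sum_add_distrib]
  congr! 4
  ring

end Associator

/-- Factorization of the order-ħ² associator of the Kontsevich star-product through
the Jacobiator: for every smooth skew-symmetric `P` and smooth `f, g, h`,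
`A₂(f,g,h) = B₂(B₀(f,g),h) + B₁(B₁(f,g),h) + B₀(B₂(f,g),h) - B₂(f,B₀(g,h))
 - B₁(f,B₁(g,h)) - B₀(f,B₂(g,h))` equals `(2/3)·Jac(P)(f,g,h)`. -/
theorem associator_order_two_factorization {d : ℕ}
    (P : (Fin d → ℝ) → Matrix (Fin d) (Fin d) ℝ)
    (hP : ∀ i j, ContDiff ℝ (⊤ : ℕ∞) fun x => P x i j)
    (hskew : ∀ x i j, P x i j = - P x j i)
    (f g h : (Fin d → ℝ) → ℝ)
    (hf : ContDiff ℝ (⊤ : ℕ∞) f) (hg : ContDiff ℝ (⊤ : ℕ∞) g)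
    (hh : ContDiff ℝ (⊤ : ℕ∞) h) (x : Fin d → ℝ) :
    B2 P (B0 f g) h x + B1 P (B1 P f g) h x + B0 (B2 P f g) h x
      - B2 P f (B0 g h) x - B1 P f (B1 P g h) x - B0 f (B2 P g h) x =
    (2 / 3) * ∑ i, ∑ j, ∑ k,
      (∑ l, (P x l k * pd l (fun y => P y i j) x
        + P x l i * pd l (fun y => P y j k) x
        + P x l j * pd l (fun y => P y k i) x)) *
      pd i f x * pd j g x * pd k h x := by
  have h2 : (2 : WithTop ℕ∞) ≤ (⊤ : ℕ∞) := WithTop.coe_le_coe.mpr le_top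
  have hf₂ := hf.of_le h2
  have hg₂ := hg.of_le h2
  have hh₂ := hh.of_le h2
  have hPx : ∀ i j, DifferentiableAt ℝ (fun y => P y i j) x :=
    fun i j => (hP i j).differentiable (by simp) x
  have hDskew : ∀ l i j, pd l (fun y => P y i j) x = -pd l (fun y => P y j i) x := by
    intro l i j
    rw [← pd_neg]
    exact congrArg (pd l · x) (funext fun y => hskew y i j)
  rw [associator_order_two_eq, hochschild_B2, hochschild_hessHess _ hf₂ hg₂ hh₂,
    hochschild_hessGrad _ hf₂ hg₂ (hh₂.differentiable two_ne_zero x),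
    hochschild_gradHess _ (hf₂.differentiable two_ne_zero x) hg₂ hh₂,
    hochschild_gradGrad _ (hf₂.differentiable two_ne_zero x) (hg₂.differentiable two_ne_zero x)
      (hh₂.differentiable two_ne_zero x),
    B1_B1_left P hPx hf₂ hg₂, B1_B1_right P hPx hg₂ hh₂]
  linear_combination
    moyal_terms_cancel (P x) (pd · f x) (pd · g x) (pd · h x) (pd_pd_comm hf₂ · · x)
      (pd_pd_comm hg₂ · · x) (pd_pd_comm hh₂ · · x)
    + dP_terms_eq_jacobiator (P x) (fun l i j => pd l (fun y => P y i j) x) (hskew x) hDskew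
      (pd · f x) (pd · g x) (pd · h x)
end
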